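/- arXiv:2305.00122 — 5 statements merged into one kernel-verified Lean document; each statement's English description precedes it below -/
import Mathlib

section
/- Let M be a matroid whose ground set E is finite, and let w : E → ℝ be injective on E. If B₁ and B₂ are both maximum-weight bases of M (i.e., each is a basis and w(B₁) ≥ w(B) and w(B₂) ≥ w(B) for every basis B of M), then B₁ = B₂. -/
/-! Suppose `B₁ ≠ B₂` and let `e` be an element of minimum weight in `B₁ ∆ B₂`, say `e ∈ B₁ \ B₂`.
Basis exchange gives `f ∈ B₂ \ B₁` with `insert f (B₁ \ {e})` a basis; maximality of `B₁` forces
`w f ≤ w e`, hence `w f < w e` by injectivity, contradicting the minimality of `e`. -/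

open Set
open scoped symmDiff

section

variable {α G : Type*} [AddCommMonoid G]

theorem finsum_mem_insert_diff_singleton_add {s : Set α} {e f : α} (hs : s.Finite) (he : e ∈ s)
    (hf : f ∉ s) (w : α → G) :
    ∑ᶠ x ∈ insert f (s \ {e}), w x + w e = ∑ᶠ x ∈ s, w x + w f := by
  have hs' : (s \ {e}).Finite := hs.sdiff
  conv_rhs => rw [← insert_sdiff_self_of_mem he, finsum_mem_insert w (fun h => h.2 rfl) hs']
  rw [finsum_mem_insert w (fun h => hf h.1) hs']
  simp only [add_comm, add_left_comm]

namespace Matroid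

def IsMaxWeightBase [PartialOrder G] (M : Matroid α) (w : α → G) (B : Set α) : Prop :=
  M.IsBase B ∧ ∀ B' : Set α, M.IsBase B' → ∑ᶠ e ∈ B', w e ≤ ∑ᶠ e ∈ B, w e

variable [PartialOrder G] [IsOrderedCancelAddMonoid G] {M : Matroid α} {w : α → G}
  {B₁ B₂ : Set α} {e : α}

theorem IsMaxWeightBase.exists_mem_diff_weight_le (hB₁ : M.IsMaxWeightBase w B₁)
    (hfin : B₁.Finite) (hB₂ : M.IsBase B₂) (he : e ∈ B₁ \ B₂) :
    ∃ f ∈ B₂ \ B₁, w f ≤ w e := by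
  obtain ⟨f, hf, hexch⟩ := hB₁.1.exchange hB₂ he
  refine ⟨f, hf, le_of_add_le_add_left (a := ∑ᶠ x ∈ B₁, w x) ?_⟩
  calc ∑ᶠ x ∈ B₁, w x + w f
      = ∑ᶠ x ∈ insert f (B₁ \ {e}), w x + w e :=
        (finsum_mem_insert_diff_singleton_add hfin he.1 hf.2 w).symm
    _ ≤ ∑ᶠ x ∈ B₁, w x + w e := add_le_add_left (hB₁.2 _ hexch) _

theorem IsMaxWeightBase.exists_mem_diff_weight_lt (hB₁ : M.IsMaxWeightBase w B₁)
    (hfin : B₁.Finite) (hw : InjOn w M.E) (hB₂ : M.IsBase B₂) (he : e ∈ B₁ \ B₂) :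
    ∃ f ∈ B₂ \ B₁, w f < w e := by
  obtain ⟨f, hf, hfe⟩ := hB₁.exists_mem_diff_weight_le hfin hB₂ he
  refine ⟨f, hf, hfe.lt_of_ne fun hwfe => hf.2 ?_⟩
  exact hw (hB₂.subset_ground hf.1) (hB₁.1.subset_ground he.1) hwfe ▸ he.1

end Matroid

end

/-- If the weight function is injective on the ground set of a finite matroid,
the maximum-weight basis is unique. -/
theorem max_weight_base_unique {α : Type*} (M : Matroid α) (hE : M.E.Finite)
    (w : α → ℝ) (hw : Set.InjOn w M.E)
    (B₁ B₂ : Set α) (hB₁ : M.IsBase B₁) (hB₂ : M.IsBase B₂)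
    (hmax₁ : ∀ B : Set α, M.IsBase B → ∑ᶠ e ∈ B, w e ≤ ∑ᶠ e ∈ B₁, w e)
    (hmax₂ : ∀ B : Set α, M.IsBase B → ∑ᶠ e ∈ B, w e ≤ ∑ᶠ e ∈ B₂, w e) :
    B₁ = B₂ := by
  by_contra hne
  have hfin₁ : B₁.Finite := hE.subset hB₁.subset_ground
  have hfin₂ : B₂.Finite := hE.subset hB₂.subset_ground
  obtain ⟨e, he, hmin⟩ :=
    (B₁ ∆ B₂).exists_min_image w (hfin₁.union hfin₂ |>.subset symmDiff_subset_union)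
      (symmDiff_nonempty.mpr hne)
  obtain ⟨f, hf, hfe⟩ : ∃ f ∈ B₁ ∆ B₂, w f < w e := by
    rcases he with he | he
    · obtain ⟨f, hf, hfe⟩ := Matroid.IsMaxWeightBase.exists_mem_diff_weight_lt
        ⟨hB₁, hmax₁⟩ hfin₁ hw hB₂ he
      exact ⟨f, Or.inr hf, hfe⟩
    · obtain ⟨f, hf, hfe⟩ := Matroid.IsMaxWeightBase.exists_mem_diff_weight_lt
        ⟨hB₂, hmax₂⟩ hfin₂ hw hB₁ he
      exact ⟨f, Or.inl hf, hfe⟩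
  exact (hmin f hf).not_gt hfe
end

section
/- Let M be a matroid whose ground set is finite, and let B₁ and B₂ be bases of M. Then there exists a bijection φ : B₁ \ B₂ → B₂ \ B₁ such that for every e ∈ B₁ \ B₂, the set (B₂ \ {φ(e)}) ∪ {e} is a basis of M. -/
/-!
Hall's marriage theorem. For `e ∈ B₁ \ B₂`, the elements `f` with `B₂ - f + e` a basis are
those of the fundamental circuit of `e` in `B₂`, other than `e`, so `e` is spanned by them.
Hence for `S ⊆ B₁ \ B₂` with neighbourhood `N(S)`, the independent set `(B₁ ∩ B₂) ∪ S` lies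
in the closure of `(B₁ ∩ B₂) ∪ N(S)`, which gives `|S| ≤ |N(S)|`. The resulting injection
`B₁ \ B₂ → B₂ \ B₁` is a bijection since `|B₁ \ B₂| = |B₂ \ B₁|`.
-/

open Set

theorem Set.exists_injective_rel_of_forall_encard_le {α β : Type*} {X : Set α} {Y : Set β}
    (hY : Y.Finite) (r : α → β → Prop)
    (hall : ∀ S ⊆ X, S.encard ≤ {y ∈ Y | ∃ x ∈ S, r x y}.encard) :
    ∃ φ : X → Y, Function.Injective φ ∧ ∀ x : X, r x (φ x) := by
  classical
  have := hY.fintype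
  refine (Fintype.all_card_le_filter_rel_iff_exists_injective (fun (x : X) (y : Y) ↦ r x y)).1
    fun A ↦ ?_
  have hA := hall (Subtype.val '' (A : Set X)) (by simp)
  have hN : {y ∈ Y | ∃ x ∈ Subtype.val '' (A : Set X), r x y} =
      Subtype.val '' (({y | ∃ x ∈ A, r x y} : Finset Y) : Set Y) := by
    ext y; simp [and_comm]
  rw [hN, Subtype.val_injective.encard_image, Subtype.val_injective.encard_image,
    encard_coe_eq_coe_finsetCard, encard_coe_eq_coe_finsetCard] at hA
  exact_mod_cast hA

namespace Matroid

variable {α : Type*} {M : Matroid α} {B I : Set α} {e f : α}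

lemma IsBase.insert_sdiff_singleton_isBase_of_mem_fundCircuit (hB : M.IsBase B) (heE : e ∈ M.E)
    (heB : e ∉ B) (hfB : f ∈ B) (hf : f ∈ M.fundCircuit e B) :
    M.IsBase (insert e (B \ {f})) := by
  rw [insert_sdiff_singleton_comm (ne_of_mem_of_not_mem hfB heB).symm]
  refine hB.exchange_isBase_of_indep' hfB heB ?_
  rwa [← hB.indep.mem_fundCircuit_iff (by rwa [hB.closure_eq]) heB]

lemma IsBase.mem_closure_setOf_insert_sdiff_singleton_isBase (hB : M.IsBase B) (heE : e ∈ M.E)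
    (heB : e ∉ B) : e ∈ M.closure {f ∈ B | M.IsBase (insert e (B \ {f}))} := by
  refine M.closure_subset_closure (fun f hf ↦ ?_)
    ((hB.fundCircuit_isCircuit heE heB).mem_closure_sdiff_singleton_of_mem (M.mem_fundCircuit e B))
  have hfB : f ∈ B := (M.fundCircuit_sdiff_eq_inter heB ▸ hf).2
  exact ⟨hfB, hB.insert_sdiff_singleton_isBase_of_mem_fundCircuit heE heB hfB hf.1⟩

lemma IsBase.encard_le_encard_exchangeable (hB : M.IsBase B) (hI : M.Indep I)
    (hfin : (I ∩ B).Finite) {S : Set α} (hS : S ⊆ I \ B) :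
    S.encard ≤ {f ∈ B \ I | ∃ e ∈ S, M.IsBase (insert e (B \ {f}))}.encard := by
  set K := I ∩ B
  set N := {f ∈ B \ I | ∃ e ∈ S, M.IsBase (insert e (B \ {f}))}
  have hKS : M.Indep (K ∪ S) := hI.subset (union_subset inter_subset_left (hS.trans sdiff_subset))
  have hspan : K ∪ S ⊆ M.closure (K ∪ N) := by
    refine union_subset (M.subset_closure_of_subset' subset_union_left
      (inter_subset_right.trans hB.subset_ground)) fun e he ↦ ?_
    refine M.closure_subset_closure (fun f hf ↦ ?_)
      (hB.mem_closure_setOf_insert_sdiff_singleton_isBase (hI.subset_ground (hS he).1) (hS he).2)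
    by_cases hfI : f ∈ I
    · exact .inl ⟨hfI, hf.1⟩
    · exact .inr ⟨⟨hf.1, hfI⟩, e, he, hf.2⟩
  have hdisj : Disjoint K S := disjoint_left.2 fun x hxK hxS ↦ (hS hxS).2 hxK.2
  refine (ENat.add_le_add_iff_left hfin.encard_lt_top.ne).1 ?_
  calc K.encard + S.encard = (K ∪ S).encard := (encard_union_eq hdisj).symm
    _ ≤ M.eRk (M.closure (K ∪ N)) := hKS.encard_le_eRk_of_subset hspan
    _ = M.eRk (K ∪ N) := M.eRk_closure_eq _
    _ ≤ (K ∪ N).encard := M.eRk_le_encard _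
    _ ≤ K.encard + N.encard := encard_union_le _ _

end Matroid

/-- Strong basis exchange bijection: for bases `B₁, B₂` of a finite matroid
there is a bijection `φ : B₁ \ B₂ → B₂ \ B₁` such that for every `e ∈ B₁ \ B₂`,
the set `(B₂ \ {φ e}) ∪ {e}` is a basis. -/
theorem base_exchange_bijection {α : Type*} (M : Matroid α) (hE : M.E.Finite)
    (B₁ B₂ : Set α) (hB₁ : M.IsBase B₁) (hB₂ : M.IsBase B₂) :
    ∃ φ : (B₁ \ B₂ : Set α) → (B₂ \ B₁ : Set α), Function.Bijective φ ∧
      ∀ e : (B₁ \ B₂ : Set α), M.IsBase (insert (e : α) (B₂ \ {(φ e : α)})) := by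
  have hB₁fin : B₁.Finite := hE.subset hB₁.subset_ground
  have hB₂fin : B₂.Finite := hE.subset hB₂.subset_ground
  obtain ⟨φ, hinj, hφ⟩ := Set.exists_injective_rel_of_forall_encard_le hB₂fin.sdiff
    (fun e f ↦ M.IsBase (insert e (B₂ \ {f})))
    fun S hS ↦ hB₂.encard_le_encard_exchangeable hB₁.indep (hB₁fin.subset inter_subset_left) hS
  have : Finite (B₂ \ B₁ : Set α) := hB₂fin.sdiff.to_subtype
  refine ⟨φ, hinj.bijective_of_nat_card_le ?_, hφ⟩
  rw [Nat.card_coe_set_eq, Nat.card_coe_set_eq, hB₁.ncard_sdiff_comm hB₂]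
end

section
/- For every integer k ≥ 1 and every real number ε > 0, it holds that ε·(1+ε)^k / ((1+ε)^k − 1) ≤ ε + 1/k. -/
theorem mul_div_sub_one_le_add_one_div {ε t y : ℝ} (hε : 0 < ε) (ht : 0 < t)
    (hy : 1 + t * ε ≤ y) : ε * y / (y - 1) ≤ ε + 1 / t := by
  have htε : 0 < t * ε := mul_pos ht hε
  have hy1 : t * ε ≤ y - 1 := by linarith
  calc ε * y / (y - 1) = ε + ε / (y - 1) := by
        field_simp [(htε.trans_le hy1).ne']
        ring
    _ ≤ ε + ε / (t * ε) := by gcongr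
    _ = ε + 1 / t := by field_simp

/-- For every integer `k ≥ 1` and real `ε > 0`,
`ε (1+ε)^k / ((1+ε)^k − 1) ≤ ε + 1/k`. -/
theorem eps_pow_ratio_le (k : ℕ) (hk : 1 ≤ k) (ε : ℝ) (hε : 0 < ε) :
    ε * (1 + ε) ^ k / ((1 + ε) ^ k - 1) ≤ ε + 1 / (k : ℝ) :=
  mul_div_sub_one_le_add_one_div hε (by exact_mod_cast hk)
    (one_add_mul_le_pow (by linarith) k)
end

section
/- Let G = (V, E) be a finite simple graph and let w : E → ℝ be injective on the edge set (all edge weights pairwise distinct). For each vertex v with at least one incident edge, let f(v) be the edge incident to v of maximum weight, and let F = { f(v) : v ∈ V, v not isolated }. Then F is acyclic: the subgraph of G with edge set F contains no cycle. -/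
/-!
Take a cycle of selected edges and an edge `e` of minimum weight on it. The edge `e` was selected
by one of its endpoints `v`, so it is the heaviest edge at `v`; but the cycle passes through `v`
along a second edge, which is then both at most and at least as heavy as `e`. Distinct weights
make the two edges equal, which is absurd.
-/

namespace SimpleGraph

variable {V : Type*} {G : SimpleGraph V}

lemma Walk.IsCycle.exists_ne_mk_mem_edges {u v x : V} {p : G.Walk u u} (hp : p.IsCycle)
    (hvx : s(v, x) ∈ p.edges) : ∃ y ≠ x, s(v, y) ∈ p.edges := by
  have hv : v ∈ p.support := p.fst_mem_support_of_mem_edges hvx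
  obtain ⟨y, hy, hyx⟩ := (p.toSubgraph.neighborSet v).exists_ne_of_one_lt_ncard
    (by rw [hp.ncard_neighborSet_toSubgraph_eq_two hv]; norm_num) x
  exact ⟨y, hyx, Walk.adj_toSubgraph_iff_mem_edges.mp hy⟩

theorem isAcyclic_of_forall_exists_isMaxOn_incidenceSet {α : Type*} [LinearOrder α]
    (w : Sym2 V → α) (hw : Set.InjOn w G.edgeSet)
    (hmax : ∀ e ∈ G.edgeSet, ∃ v ∈ e, IsMaxOn w (G.incidenceSet v) e) : G.IsAcyclic := by
  classical
  intro u p hp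
  have hne : p.edges.toFinset.Nonempty := by simpa [List.toFinset_nonempty_iff] using hp.not_nil
  obtain ⟨e, he, hmin⟩ := p.edges.toFinset.exists_min_image w hne
  rw [List.mem_toFinset] at he
  have heG : e ∈ G.edgeSet := p.edges_subset_edgeSet he
  obtain ⟨v, hve, hvmax⟩ := hmax e heG
  obtain ⟨x, rfl⟩ := Sym2.mem_iff_exists.mp hve
  obtain ⟨y, hyx, hy⟩ := hp.exists_ne_mk_mem_edges he
  have hyG : s(v, y) ∈ G.edgeSet := p.edges_subset_edgeSet hy
  have hle : w s(v, y) ≤ w s(v, x) := hvmax ⟨hyG, Sym2.mem_mk_left v y⟩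
  have hge : w s(v, x) ≤ w s(v, y) := hmin _ (List.mem_toFinset.mpr hy)
  exact hyx (Sym2.congr_right.mp (hw hyG heG (le_antisymm hle hge)))

end SimpleGraph

theorem max_incident_edges_acyclic_general {V : Type*} (G : SimpleGraph V)
    (w : Sym2 V → ℝ) (hw : Set.InjOn w G.edgeSet)
    (f : V → Sym2 V)
    (hf : ∀ v : V, (G.incidenceSet v).Nonempty →
      f v ∈ G.incidenceSet v ∧ ∀ e ∈ G.incidenceSet v, w e ≤ w (f v)) :
    (SimpleGraph.fromEdgeSet
      {e : Sym2 V | ∃ v : V, (G.incidenceSet v).Nonempty ∧ e = f v}).IsAcyclic := by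
  have hHG : (SimpleGraph.fromEdgeSet
      {e : Sym2 V | ∃ v : V, (G.incidenceSet v).Nonempty ∧ e = f v}).edgeSet ⊆ G.edgeSet := by
    rw [SimpleGraph.edgeSet_fromEdgeSet]
    rintro _ ⟨⟨v, hv, rfl⟩, -⟩
    exact (hf v hv).1.1
  refine SimpleGraph.isAcyclic_of_forall_exists_isMaxOn_incidenceSet w (hw.mono hHG) ?_
  intro e he
  rw [SimpleGraph.edgeSet_fromEdgeSet] at he
  obtain ⟨⟨v, hv, rfl⟩, -⟩ := he
  exact ⟨v, (hf v hv).1.2, fun e he => (hf v hv).2 e ⟨hHG he.1, he.2⟩⟩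

/-- If each non-isolated vertex `v` of a finite simple graph with pairwise
distinct edge weights selects its maximum-weight incident edge `f v`, then the
set `F` of selected edges is acyclic. -/
theorem max_incident_edges_acyclic {V : Type*} [Fintype V] (G : SimpleGraph V)
    (w : Sym2 V → ℝ) (hw : Set.InjOn w G.edgeSet)
    (f : V → Sym2 V)
    (hf : ∀ v : V, (G.incidenceSet v).Nonempty →
      f v ∈ G.incidenceSet v ∧ ∀ e ∈ G.incidenceSet v, w e ≤ w (f v)) :
    (SimpleGraph.fromEdgeSet
      {e : Sym2 V | ∃ v : V, (G.incidenceSet v).Nonempty ∧ e = f v}).IsAcyclic :=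
  max_incident_edges_acyclic_general G w hw f hf
end

section
/- Let ε > 0 be a real number, let j and j* be integers with j ≤ j*, let s ≥ 1 be an integer, and let a_0, a_1, …, a_s be real numbers such that a_0 = (1+ε)^{j*}, a_i ≥ a_{i−1}/(1+ε) for all 1 ≤ i ≤ s, and a_{s−1} = (1+ε)^j. Then Σ_{i=1}^{s} a_i ≥ Σ_{i=j}^{j*−1} (1+ε)^i = ((1+ε)^{j*} − (1+ε)^j)/ε. -/
/-!
Dividing by at most `1 + ε` per step, the path needs at least `j* - j` steps to fall from
`(1+ε)^{j*}` to `(1+ε)^j`, and its `k`-th weight is at least `(1+ε)^{j* - k}`. Summing these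
lower bounds over `k = 1, …, j* - j` gives exactly the geometric sum `∑_{i=j}^{j*-1} (1+ε)^i`.
-/

open Finset

theorem Finset.sum_Ico_zpow_eq_div {K : Type*} [Field K] {x : K} (hx₀ : x ≠ 0) (hx₁ : x ≠ 1)
    {j m : ℤ} (hjm : j ≤ m) :
    ∑ i ∈ Ico j m, x ^ i = (x ^ m - x ^ j) / (x - 1) := by
  have hx₁' : x - 1 ≠ 0 := sub_ne_zero.mpr hx₁
  induction m, hjm using Int.leInduction with
  | base => simp
  | succ m hjm ih =>
    rw [← Order.succ_eq_add_one, ← insert_Ico_right_eq_Ico_succ hjm, sum_insert (by simp), ih,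
      Order.succ_eq_add_one, zpow_add_one₀ hx₀]
    field_simp
    ring

theorem Finset.sum_Ico_int_eq_sum_Icc_toNat {M : Type*} [AddCommMonoid M] (f : ℤ → M)
    (j m : ℤ) : ∑ i ∈ Ico j m, f i = ∑ k ∈ Icc 1 (m - j).toNat, f (m - k) := by
  refine sum_nbij' (fun i => (m - i).toNat) (fun k => m - k) ?_ ?_ ?_ ?_ ?_ <;>
    intro i hi <;> simp only [mem_Ico, mem_Icc] at hi ⊢
  all_goals first | omega | (congr 1; omega)

theorem div_pow_le_of_forall_div_le {K : Type*} [Field K] [LinearOrder K] [IsStrictOrderedRing K]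
    {r : K} (hr : 0 < r) {a : ℕ → K} {s : ℕ} (h : ∀ i < s, a i / r ≤ a (i + 1)) :
    ∀ i ≤ s, a 0 / r ^ i ≤ a i := by
  intro i hi
  induction i with
  | zero => simp
  | succ i ih =>
    calc a 0 / r ^ (i + 1) = a 0 / r ^ i / r := by rw [pow_succ, div_div]
      _ ≤ a i / r := by gcongr; exact ih (by omega)
      _ ≤ a (i + 1) := h i hi

theorem decreasing_path_weight_bound_general (ε : ℝ) (hε : 0 < ε)
    (j jstar : ℤ) (hj : j ≤ jstar) (s : ℕ) (a : ℕ → ℝ)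
    (ha0 : a 0 = (1 + ε) ^ jstar)
    (hstep : ∀ i : ℕ, 1 ≤ i → i ≤ s → a (i - 1) / (1 + ε) ≤ a i)
    (hlast : a (s - 1) = (1 + ε) ^ j) :
    (∑ i ∈ Finset.Icc 1 s, a i ≥ ∑ i ∈ Finset.Ico j jstar, (1 + ε) ^ i) ∧
      ∑ i ∈ Finset.Ico j jstar, (1 + ε) ^ i
        = ((1 + ε) ^ jstar - (1 + ε) ^ j) / ε := by
  have hx : 1 < 1 + ε := by linarith
  have hx₀ : 0 < 1 + ε := by linarith
  have hlow : ∀ i ≤ s, (1 + ε) ^ (jstar - i) ≤ a i := fun i hi => by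
    have := div_pow_le_of_forall_div_le hx₀
      (fun i hi => by simpa using hstep (i + 1) (by omega) hi) i hi
    rwa [ha0, ← zpow_natCast, ← zpow_sub₀ hx₀.ne'] at this
  have hlen : (jstar - j).toNat ≤ s := by
    have := (zpow_le_zpow_iff_right₀ hx).mp (hlast ▸ hlow (s - 1) (Nat.sub_le s 1))
    omega
  refine ⟨?_, by simpa using sum_Ico_zpow_eq_div hx₀.ne' hx.ne' hj⟩
  rw [ge_iff_le, sum_Ico_int_eq_sum_Icc_toNat]
  calc ∑ k ∈ Icc 1 (jstar - j).toNat, (1 + ε) ^ (jstar - k)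
      ≤ ∑ k ∈ Icc 1 (jstar - j).toNat, a k :=
        sum_le_sum fun k hk => hlow k ((mem_Icc.mp hk).2.trans hlen)
    _ ≤ ∑ k ∈ Icc 1 s, a k :=
        sum_le_sum_of_subset_of_nonneg (Icc_subset_Icc_right hlen) fun k hk _ =>
          (zpow_pos hx₀ _).le.trans (hlow k (mem_Icc.mp hk).2)

/-- If `a 0 = (1+ε)^{j*}`, each `a i` is at least `a (i-1) / (1+ε)`, and
`a (s-1) = (1+ε)^j`, then `∑_{i=1}^{s} a i` is at least the geometric sum
`∑_{i=j}^{j*-1} (1+ε)^i = ((1+ε)^{j*} − (1+ε)^j)/ε`. -/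
theorem decreasing_path_weight_bound (ε : ℝ) (hε : 0 < ε)
    (j jstar : ℤ) (hj : j ≤ jstar) (s : ℕ) (hs : 1 ≤ s) (a : ℕ → ℝ)
    (ha0 : a 0 = (1 + ε) ^ jstar)
    (hstep : ∀ i : ℕ, 1 ≤ i → i ≤ s → a (i - 1) / (1 + ε) ≤ a i)
    (hlast : a (s - 1) = (1 + ε) ^ j) :
    (∑ i ∈ Finset.Icc 1 s, a i ≥ ∑ i ∈ Finset.Ico j jstar, (1 + ε) ^ i) ∧
      ∑ i ∈ Finset.Ico j jstar, (1 + ε) ^ i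
        = ((1 + ε) ^ jstar - (1 + ε) ^ j) / ε :=
  decreasing_path_weight_bound_general ε hε j jstar hj s a ha0 hstep hlast
end
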